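/- Let m ≥ 1 and n ≥ 2 be integers, let D be a real number with D ≥ 4m(n+2), and define φ : [0,m]^n → finite subsets of ℝ by φ((x_i)_i) = {4m(i−1) + x_i : i = 1,…,n} ∪ {D}. If (x_i)_i, (y_i)_i ∈ [0,m]^n and f : ℝ → ℝ is a surjective isometry with d_H(φ((x_i)_i), f(φ((y_i)_i))) ≤ m, then f is a translation, i.e., there exists c ∈ ℝ with f(t) = t + c for all t ∈ ℝ. -/
import Mathlib


open Metric

/-- The map `φ_m^n : [0,m]^n → [ℝ]^{<ω}`, sending `(x_i)_{i=1,…,n}` to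
`{4m(i-1) + x_i : i = 1,…,n} ∪ {D}` (indices `i : Fin n` are 0-based). -/
def phi (m n : ℕ) (D : ℝ) (x : Fin n → ℝ) : Set ℝ :=
  {t : ℝ | ∃ i : Fin n, t = 4 * (m : ℝ) * ((i : ℕ) : ℝ) + x i} ∪ {D}

lemma phi_finite (m n : ℕ) (D : ℝ) (x : Fin n → ℝ) : (phi m n D x).Finite := by
  apply Set.Finite.union _ (Set.finite_singleton D)
  apply Set.Finite.subset (Set.finite_range (fun i : Fin n => 4 * (m : ℝ) * ((i : ℕ) : ℝ) + x i))
  rintro t ⟨i, hi⟩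
  exact ⟨i, hi.symm⟩

/-- If `n ≥ 2`, `D ≥ 4m(n+2)`, and `f : ℝ → ℝ` is a surjective isometry with
`d_H(φ_m^n(x), f(φ_m^n(y))) ≤ m`, then `f` is a translation. -/
theorem isometry_close_to_phi_is_translation (m n : ℕ) (hm : 1 ≤ m) (hn : 2 ≤ n) (D : ℝ)
    (hD : 4 * (m : ℝ) * ((n : ℝ) + 2) ≤ D)
    (x y : Fin n → ℝ) (hx : ∀ i, x i ∈ Set.Icc (0 : ℝ) m) (hy : ∀ i, y i ∈ Set.Icc (0 : ℝ) m)
    (f : ℝ → ℝ) (hf : Isometry f) (hfsurj : Function.Surjective f)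
    (hclose : hausdorffDist (phi m n D x) (f '' phi m n D y) ≤ m) :
    ∃ c : ℝ, ∀ t : ℝ, f t = t + c := by
  classical
  set c := f 0 with hc
  have hpm : ∀ t : ℝ, f t = t + c ∨ f t = -t + c := by
    intro t
    have h := hf.dist_eq t 0
    rw [Real.dist_eq, Real.dist_eq, sub_zero] at h
    rcases abs_eq_abs.mp h with h' | h'
    · left; linarith
    · right; linarith
  have hm' : (1 : ℝ) ≤ (m : ℝ) := by exact_mod_cast hm
  have hn' : (2 : ℝ) ≤ (n : ℝ) := by exact_mod_cast hn
  rcases hpm 1 with h1 | h1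
  · refine ⟨c, fun t => ?_⟩
    rcases hpm t with h | h
    · exact h
    · have hd := hf.dist_eq t 1
      rw [Real.dist_eq, Real.dist_eq, h, h1] at hd
      rcases abs_eq_abs.mp hd with h' | h'
      · linarith
      · linarith
  · exfalso
    have hneg : ∀ t : ℝ, f t = -t + c := by
      intro t
      rcases hpm t with h | h
      · have hd := hf.dist_eq t 1
        rw [Real.dist_eq, Real.dist_eq, h, h1] at hd
        rcases abs_eq_abs.mp hd with h' | h'
        · linarith
        · linarith
      · exact h
    have hBfin : (f '' phi m n D y).Finite := (phi_finite m n D y).image f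
    have hBne : (f '' phi m n D y).Nonempty := ⟨f D, D, Or.inr rfl, rfl⟩
    have hAne : (phi m n D x).Nonempty := ⟨D, Or.inr rfl⟩
    have hedist : EMetric.hausdorffEdist (phi m n D x) (f '' phi m n D y) ≠ ⊤ :=
      hausdorffEdist_ne_top_of_nonempty_of_bounded hAne hBne
        (phi_finite m n D x).isBounded hBfin.isBounded
    have key : ∀ a ∈ phi m n D x, ∃ s ∈ phi m n D y, |a - (-s + c)| ≤ m := by
      intro a ha
      have h1 : infDist a (f '' phi m n D y) ≤ m :=
        le_trans (infDist_le_hausdorffDist_of_mem ha hedist) hclose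
      obtain ⟨b, hb, heq⟩ := hBfin.isCompact.exists_infDist_eq_dist hBne a
      obtain ⟨s, hs, hfs⟩ := hb
      refine ⟨s, hs, ?_⟩
      have hd : dist a b ≤ m := heq ▸ h1
      rw [← hfs, hneg s, Real.dist_eq] at hd
      exact hd
    have hjle : ∀ j : Fin n, ((j : ℕ) : ℝ) ≤ (n : ℝ) - 1 := by
      intro j
      have h : ((j : ℕ) : ℕ) + 1 ≤ n := j.isLt
      have : ((j : ℕ) : ℝ) + 1 ≤ (n : ℝ) := by exact_mod_cast h
      linarith
    have hjge : ∀ j : Fin n, (0 : ℝ) ≤ ((j : ℕ) : ℝ) := fun j => Nat.cast_nonneg _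
    have hmul : ∀ j : Fin n, 4 * (m : ℝ) * ((j : ℕ) : ℝ) ≤ 4 * (m : ℝ) * ((n : ℝ) - 1) := by
      intro j
      apply mul_le_mul_of_nonneg_left (hjle j)
      linarith
    have hmul0 : ∀ j : Fin n, (0 : ℝ) ≤ 4 * (m : ℝ) * ((j : ℕ) : ℝ) := by
      intro j
      apply mul_nonneg (by linarith) (hjge j)
    set i0 : Fin n := ⟨0, by omega⟩ with hi0def
    set i1 : Fin n := ⟨1, by omega⟩ with hi1def
    have hi0 : ((i0 : ℕ) : ℝ) = 0 := by simp [hi0def]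
    have hi1 : ((i1 : ℕ) : ℝ) = 1 := by simp [hi1def]
    -- lower bound on c from the point D
    have hcD : D - m ≤ c := by
      obtain ⟨s, hs, hdD⟩ := key D (Or.inr rfl)
      rw [abs_le] at hdD
      rcases hs with ⟨j, hj⟩ | hsD
      · rw [hj] at hdD
        have := (hy j).1
        have := hmul0 j
        linarith [hdD.2]
      · rw [Set.mem_singleton_iff] at hsD
        rw [hsD] at hdD
        nlinarith [hdD.2, hm', hn', hD]
    -- upper bound on c from the point 4m·0 + x 0
    have hcU : c ≤ D + 2 * m := by
      obtain ⟨s, hs, hd0⟩ := key (4 * (m : ℝ) * ((i0 : ℕ) : ℝ) + x i0) (Or.inl ⟨i0, rfl⟩)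
      rw [abs_le, hi0] at hd0
      rcases hs with ⟨j, hj⟩ | hsD
      · exfalso
        rw [hj] at hd0
        have h1 := (hy j).2
        have h2 := (hx i0).1
        have h3 := (hx i0).2
        have h4 := hmul j
        have h5 := hd0.1
        nlinarith [hcD, hD, hm', hn']
      · rw [Set.mem_singleton_iff] at hsD
        rw [hsD] at hd0
        have := (hx i0).2
        linarith [hd0.1]
    -- contradiction from the point 4m·1 + x 1
    obtain ⟨s, hs, hd1⟩ := key (4 * (m : ℝ) * ((i1 : ℕ) : ℝ) + x i1) (Or.inl ⟨i1, rfl⟩)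
    rw [abs_le, hi1] at hd1
    rcases hs with ⟨j, hj⟩ | hsD
    · rw [hj] at hd1
      have h1 := (hy j).2
      have h2 := (hx i1).1
      have h3 := (hx i1).2
      have h4 := hmul j
      have h5 := hd1.1
      nlinarith [hcD, hD, hm', hn']
    · rw [Set.mem_singleton_iff] at hsD
      rw [hsD] at hd1
      have h2 := (hx i1).1
      linarith [hd1.2, hcU, hm']
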